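/- Let X be an uncountable Polish space and let C ⊆ X be a nonempty analytic set. Then there exists a sequence y : ω → X such that C = Λ_y(FS) = Λ_y(H). Consequently, the family of nonempty sets of the form Λ_y(FS) for y : ω → X, as well as the family of nonempty sets of the form Λ_y(H), each coincides with the family of nonempty analytic subsets of X. -/

import Mathlib

open Set Filter Topology

/-- `FS(D)`: the set of finite sums of distinct elements of `D`. -/
def FS (D : Set ℕ) : Set ℕ :=
  {n | ∃ α : Finset ℕ, ↑α ⊆ D ∧ α.Nonempty ∧ ∑ i ∈ α, i = n}

variable {X : Type*}

/-- `η` is an `FS`-limit point of the sequence `x : ω → X`. -/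
def IsFSLimitPoint [TopologicalSpace X] (x : ℕ → X) (η : X) : Prop :=
  ∃ D : Set ℕ, D.Infinite ∧ ∀ U ∈ 𝓝 η, ∃ K : Set ℕ, K.Finite ∧
    ∀ n ∈ FS (D \ K), x n ∈ U

/-- `η` is an `FS`-cluster point of the sequence `x : ω → X`. -/
def IsFSClusterPoint [TopologicalSpace X] (x : ℕ → X) (η : X) : Prop :=
  ∀ U ∈ 𝓝 η, ∃ D : Set ℕ, D.Infinite ∧ FS D ⊆ {n | x n ∈ U}

/-- The Hindman ideal `H`: sets which are not IP-sets. -/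
def hindmanIdeal : Set (Set ℕ) :=
  {S | ∀ D : Set ℕ, D.Infinite → ¬ FS D ⊆ S}

/-- `η` is an `I`-limit point of `y`: some subsequence indexed by a set `S ∉ I`
converges (in the ordinary sense) to `η`. -/
def IsIdealLimitPoint [TopologicalSpace X] (I : Set (Set ℕ)) (y : ℕ → X) (η : X) : Prop :=
  ∃ S : Set ℕ, S ∉ I ∧ ∀ U ∈ 𝓝 η, {n ∈ S | y n ∉ U}.Finite

/-
Write the nonempty analytic set `C` as the range of a continuous `f : (ℕ → ℕ) → X`, and let
`code x k` be a code of the prefix `x 0, …, x (k - 1)`, strictly increasing in `k`. Put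
`y n = f (trunc x k)` whenever the binary digits of `n` are codes of prefixes of `x` of length at
most `k`, `code x k` among them. Every finite sum of the powers `2 ^ code x j` codes a prefix of
`x`, and only small numbers code short prefixes, so `y` converges to `f x` along this IP-set:
points of `C` are `H`-limit points, and these are always `FS`-limit points.

Conversely, let `η` be an `FS`-limit point along `D`. Grouping `D` into consecutive blocks whose
sums `g j` have pairwise disjoint binary digits, the numbers `g j` and `g j + g j'` are again
finite sums from the tail of `D`. If they eventually code prefixes, these prefixes are compatible
and of increasing length, so they glue to some `x` with `η = lim y (g j) = f x`; otherwise `y`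
takes the value `f 0` in every neighbourhood of `η`, and `η = f 0`.

Finally, `Λ_y(FS)` and `Λ_y(H)` are projections of Borel subsets of `(ℕ → Bool) × X`.
-/

namespace HindmanLimit

theorem FS_mono {D D' : Set ℕ} (h : D ⊆ D') : FS D ⊆ FS D' :=
  fun _ ⟨α, hα, hne, hs⟩ => ⟨α, hα.trans h, hne, hs⟩

theorem FS_sdiff_Iic_subset (D : Set ℕ) (m : ℕ) : FS (D \ Iic m) ⊆ FS D \ Iic m := by
  rintro _ ⟨α, hα, ⟨a, ha⟩, rfl⟩
  refine ⟨⟨α, hα.trans sdiff_subset, ⟨a, ha⟩, rfl⟩, notMem_Iic.mpr ?_⟩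
  exact (notMem_Iic.mp (hα ha).2).trans_le (Finset.single_le_sum (fun i _ => i.zero_le) ha)

theorem notMem_hindmanIdeal_iff {S : Set ℕ} :
    S ∉ hindmanIdeal ↔ ∃ D : Set ℕ, D.Infinite ∧ FS D ⊆ S := by
  simp [hindmanIdeal]

section LimitPoints

variable [TopologicalSpace X] {y : ℕ → X} {η : X}

theorem isFSLimitPoint_iff : IsFSLimitPoint y η ↔
    ∃ D : Set ℕ, D.Infinite ∧ ∀ U ∈ 𝓝 η, ∃ m, ∀ n ∈ FS (D \ Iic m), y n ∈ U := by
  refine exists_congr fun D => and_congr_right fun _ => forall₂_congr fun U _ => ⟨?_, ?_⟩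
  · rintro ⟨K, hK, hKU⟩
    obtain ⟨m, hm⟩ := hK.bddAbove
    exact ⟨m, fun n hn => hKU n (FS_mono (sdiff_subset_sdiff_right fun _ h => hm h) hn)⟩
  · rintro ⟨m, hm⟩
    exact ⟨Iic m, finite_Iic m, hm⟩

theorem isIdealLimitPoint_hindmanIdeal_iff : IsIdealLimitPoint hindmanIdeal y η ↔
    ∃ D : Set ℕ, D.Infinite ∧ ∀ U ∈ 𝓝 η, ∃ m, ∀ n ∈ FS D \ Iic m, y n ∈ U := by
  constructor
  · rintro ⟨S, hS, hSU⟩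
    obtain ⟨D, hD, hDS⟩ := notMem_hindmanIdeal_iff.mp hS
    refine ⟨D, hD, fun U hU => ?_⟩
    obtain ⟨m, hm⟩ := (hSU U hU).bddAbove
    exact ⟨m, fun n hn => by_contra fun hnU => hn.2 (hm ⟨hDS hn.1, hnU⟩)⟩
  · rintro ⟨D, hD, hDU⟩
    refine ⟨FS D, notMem_hindmanIdeal_iff.mpr ⟨D, hD, subset_rfl⟩, fun U hU => ?_⟩
    obtain ⟨m, hm⟩ := hDU U hU
    exact (finite_Iic m).subset fun n hn => by_contra fun hnm => hn.2 (hm n ⟨hn.1, hnm⟩)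

theorem IsIdealLimitPoint.isFSLimitPoint (h : IsIdealLimitPoint hindmanIdeal y η) :
    IsFSLimitPoint y η := by
  obtain ⟨D, hD, hDU⟩ := isIdealLimitPoint_hindmanIdeal_iff.mp h
  exact isFSLimitPoint_iff.mpr ⟨D, hD, fun U hU =>
    (hDU U hU).imp fun m hm n hn => hm n (FS_sdiff_Iic_subset D m hn)⟩

end LimitPoints

theorem _root_.Nat.testBit_sum_two_pow (s : Finset ℕ) (i : ℕ) :
    (∑ j ∈ s, 2 ^ j).testBit i ↔ i ∈ s := by
  rw [← Nat.mem_bitIndices, ← List.mem_toFinset, Finset.toFinset_bitIndices_sum_two_pow]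

theorem _root_.Nat.testBit_add_of_lt_of_dvd {a b v : ℕ} (ha : a < 2 ^ v) (hb : 2 ^ v ∣ b)
    (i : ℕ) : (a + b).testBit i = (a.testBit i || b.testBit i) := by
  obtain ⟨c, rfl⟩ := hb
  rw [add_comm, Nat.testBit_two_pow_mul_add _ ha, Nat.testBit_two_pow_mul]
  rcases lt_or_ge i v with h | h
  · simp [h, not_le.mpr h]
  · simp [h, not_lt.mpr h,
      Nat.testBit_lt_two_pow (ha.trans_le (Nat.pow_le_pow_right two_pos h))]

def code (x : ℕ → ℕ) : ℕ → ℕ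
  | 0 => 0
  | k + 1 => Nat.pair (code x k) (x k) + 1

theorem code_strictMono (x : ℕ → ℕ) : StrictMono (code x) :=
  strictMono_nat_of_lt_succ fun k => Nat.lt_succ_of_le (Nat.left_le_pair (code x k) (x k))

theorem code_inj {x x' : ℕ → ℕ} : ∀ {k k' : ℕ}, code x k = code x' k' →
    k = k' ∧ ∀ i < k, x i = x' i
  | 0, 0, _ => ⟨rfl, fun _ h => absurd h (Nat.not_lt_zero _)⟩
  | 0, _ + 1, h => by simp [code] at h
  | _ + 1, 0, h => by simp [code] at h
  | k + 1, k' + 1, h => by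
      obtain ⟨hcode, hx⟩ := Nat.pair_eq_pair.mp (Nat.succ_injective h)
      obtain ⟨rfl, hagree⟩ := code_inj hcode
      refine ⟨rfl, fun i hi => ?_⟩
      rcases Nat.lt_succ_iff_lt_or_eq.mp hi with hi | rfl
      exacts [hagree i hi, hx]

def trunc (x : ℕ → ℕ) (k : ℕ) : ℕ → ℕ := fun i => if i < k then x i else 0

theorem trunc_eq_trunc_of_forall_lt {x x' : ℕ → ℕ} {k : ℕ} (h : ∀ i < k, x i = x' i) :
    trunc x k = trunc x' k :=
  funext fun i => by unfold trunc; split_ifs with hi <;> simp [h i, hi]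

theorem tendsto_trunc (x : ℕ → ℕ) : Tendsto (trunc x) atTop (𝓝 x) :=
  tendsto_pi_nhds.mpr fun i => tendsto_const_nhds.congr' <|
    (eventually_gt_atTop i).mono fun _ hk => (if_pos hk).symm

theorem exists_trunc_eq_of_coherent {k : ℕ → ℕ} {x : ℕ → ℕ → ℕ} (hk : StrictMono k)
    (hcoh : ∀ j j', j < j' → ∀ i < k j, x j i = x j' i) :
    ∃ z, ∀ j, trunc (x j) (k j) = trunc z (k j) := by
  refine ⟨fun i => x (i + 1) i, fun j => trunc_eq_trunc_of_forall_lt fun i hi => ?_⟩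
  rcases lt_trichotomy j (i + 1) with h | rfl | h
  · exact hcoh _ _ h i hi
  · rfl
  · exact (hcoh _ _ h i (Nat.lt_of_lt_of_le i.lt_succ_self (hk.id_le _))).symm

def CodesPrefix (n : ℕ) (x : ℕ → ℕ) (k : ℕ) : Prop :=
  n.testBit (code x k) ∧ ∀ i, n.testBit i → ∃ j ≤ k, i = code x j

theorem CodesPrefix.unique {n k k' : ℕ} {x x' : ℕ → ℕ} (h : CodesPrefix n x k)
    (h' : CodesPrefix n x' k') : k = k' ∧ trunc x k = trunc x' k' := by
  obtain ⟨j, hjk, hj⟩ := h.2 _ h'.1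
  obtain ⟨j', hjk', hj'⟩ := h'.2 _ h.1
  obtain ⟨rfl, -⟩ := code_inj hj
  obtain ⟨rfl, hagree⟩ := code_inj hj'
  obtain rfl : k = k' := le_antisymm hjk' hjk
  exact ⟨rfl, trunc_eq_trunc_of_forall_lt hagree⟩

theorem CodesPrefix.lt_two_pow {n k : ℕ} {x : ℕ → ℕ} (h : CodesPrefix n x k) :
    n < 2 ^ (code x k + 1) :=
  Nat.lt_pow_two_of_testBit n fun i hi => Bool.eq_false_iff.mpr fun hbit => by
    obtain ⟨j, hjk, rfl⟩ := h.2 i hbit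
    exact absurd ((code_strictMono x).monotone hjk) (by omega)

theorem codesPrefix_sum_two_pow_code (x : ℕ → ℕ) {A : Finset ℕ} (hA : A.Nonempty) :
    CodesPrefix (∑ j ∈ A, 2 ^ code x j) x (A.max' hA) := by
  classical
  rw [← Finset.sum_image fun a _ b _ h => (code_strictMono x).injective h]
  simp only [CodesPrefix, Nat.testBit_sum_two_pow, Finset.mem_image]
  exact ⟨⟨_, A.max'_mem hA, rfl⟩, fun i ⟨j, hj, hji⟩ => ⟨j, A.le_max' j hj, hji.symm⟩⟩

theorem two_pow_code_injective (x : ℕ → ℕ) : Function.Injective fun j => 2 ^ code x j :=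
  (Nat.pow_right_injective le_rfl).comp (code_strictMono x).injective

theorem exists_codesPrefix_of_mem_FS (x : ℕ → ℕ) {n : ℕ}
    (hn : n ∈ FS (range fun j => 2 ^ code x j)) : ∃ k, CodesPrefix n x k := by
  classical
  obtain ⟨α, hα, hne, rfl⟩ := hn
  rw [← image_univ] at hα
  obtain ⟨A, -, rfl⟩ := Finset.subset_set_image_iff.mp hα
  rw [Finset.sum_image fun a _ b _ h => two_pow_code_injective x h]
  exact ⟨_, codesPrefix_sum_two_pow_code x (Finset.image_nonempty.mp hne)⟩

theorem CodesPrefix.lt_and_eq_of_add {a b v k k' l : ℕ} {x x' z : ℕ → ℕ}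
    (ha : a < 2 ^ v) (hb : 2 ^ v ∣ b) (hxa : CodesPrefix a x k) (hxb : CodesPrefix b x' k')
    (hz : CodesPrefix (a + b) z l) : k < k' ∧ ∀ i < k, x i = x' i := by
  have hbits := Nat.testBit_add_of_lt_of_dvd ha hb
  obtain ⟨i, -, hi⟩ := hz.2 (code x k) (by simp [hbits, hxa.1])
  obtain ⟨i', -, hi'⟩ := hz.2 (code x' k') (by simp [hbits, hxb.1])
  have hlt : code x k < code x' k' := by
    have h1 : 2 ^ code x k < 2 ^ v := (Nat.ge_two_pow_of_testBit hxa.1).trans_lt ha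
    have h2 : v ≤ code x' k' := by
      obtain ⟨c, rfl⟩ := hb
      have hbit := hxb.1
      simp only [Nat.testBit_two_pow_mul, Bool.and_eq_true, decide_eq_true_eq] at hbit
      exact hbit.1
    exact ((Nat.pow_lt_pow_iff_right (by norm_num)).mp h1).trans_le h2
  rw [hi, hi', (code_strictMono z).lt_iff_lt] at hlt
  obtain ⟨rfl, hxz⟩ := code_inj hi
  obtain ⟨rfl, hx'z⟩ := code_inj hi'
  exact ⟨hlt, fun j hj => (hxz j hj).trans (hx'z j (hj.trans hlt)).symm⟩

theorem _root_.Set.Infinite.exists_finset_dvd_sum {D : Set ℕ} (hD : D.Infinite) {d : ℕ}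
    (hd : 0 < d) : ∃ α : Finset ℕ, ↑α ⊆ D ∧ α.Nonempty ∧ d ∣ ∑ a ∈ α, a := by
  obtain ⟨r, hr⟩ : ∃ r, {a ∈ D | a % d = r}.Infinite := by
    by_contra! h
    refine hD (((Finset.range d).finite_toSet.biUnion fun r _ => h r).subset fun a ha => ?_)
    exact mem_biUnion (Finset.mem_range.mpr (Nat.mod_lt a hd)) ⟨ha, rfl⟩
  obtain ⟨α, hαr, hα⟩ := hr.exists_subset_card_eq d
  refine ⟨α, fun a ha => (hαr ha).1, Finset.card_pos.mp (hα ▸ hd), Nat.dvd_of_mod_eq_zero ?_⟩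
  rw [Finset.sum_nat_mod, Finset.sum_congr rfl fun a ha => (hαr ha).2, Finset.sum_const, hα,
    smul_eq_mul, Nat.mul_mod_right]

section Blocks

variable {D : Set ℕ} (hD : D.Infinite)

noncomputable def nextBlock (s : ℕ) : Finset ℕ :=
  ((hD.sdiff (finite_Iic s)).exists_finset_dvd_sum (d := 2 ^ (s + 1)) (by positivity)).choose

theorem nextBlock_spec (s : ℕ) : ↑(nextBlock hD s) ⊆ D \ Iic s ∧ (nextBlock hD s).Nonempty ∧
    2 ^ (s + 1) ∣ ∑ a ∈ nextBlock hD s, a :=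
  ((hD.sdiff (finite_Iic s)).exists_finset_dvd_sum (d := 2 ^ (s + 1)) (by positivity)).choose_spec

/-- `blockStart hD (j + 1)` is the sum of the `j`-th block, which consists of elements of `D`
above `blockStart hD j`. -/
noncomputable def blockStart : ℕ → ℕ
  | 0 => 0
  | j + 1 => ∑ a ∈ nextBlock hD (blockStart j), a

theorem lt_of_mem_nextBlock_blockStart {j a : ℕ} (ha : a ∈ nextBlock hD (blockStart hD j)) :
    blockStart hD j < a :=
  not_le.mp ((nextBlock_spec hD _).1 ha).2

theorem blockStart_strictMono : StrictMono (blockStart hD) := by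
  refine strictMono_nat_of_lt_succ fun j => ?_
  obtain ⟨a, ha⟩ := (nextBlock_spec hD (blockStart hD j)).2.1
  exact (lt_of_mem_nextBlock_blockStart hD ha).trans_le
    (Finset.single_le_sum (fun i _ => i.zero_le) ha)

theorem two_pow_dvd_blockStart {j j' : ℕ} (h : j < j') :
    2 ^ (blockStart hD (j + 1) + 1) ∣ blockStart hD (j' + 1) :=
  (pow_dvd_pow 2 (Nat.succ_le_succ ((blockStart_strictMono hD).monotone h))).trans
    (nextBlock_spec hD (blockStart hD j')).2.2

theorem sum_blockStart_mem_FS {β : Finset ℕ} (hβ : β.Nonempty) {m : ℕ} (hm : ∀ j ∈ β, m ≤ j) :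
    ∑ j ∈ β, blockStart hD (j + 1) ∈ FS (D \ Iic m) := by
  classical
  have hdisj : (β : Set ℕ).PairwiseDisjoint fun j => nextBlock hD (blockStart hD j) := by
    suffices ∀ {j j'}, j < j' → Disjoint (nextBlock hD (blockStart hD j))
        (nextBlock hD (blockStart hD j')) from
      fun j _ j' _ hne => (lt_or_gt_of_ne hne).elim this fun h => (this h).symm
    intro j j' h
    refine Finset.disjoint_left.mpr fun a ha ha' =>
      (lt_of_mem_nextBlock_blockStart hD ha').not_ge ?_
    calc a ≤ blockStart hD (j + 1) := Finset.single_le_sum (fun i _ => i.zero_le) ha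
      _ ≤ blockStart hD j' := (blockStart_strictMono hD).monotone h
  refine ⟨β.biUnion fun j => nextBlock hD (blockStart hD j), ?_, ?_, Finset.sum_biUnion hdisj⟩
  · intro a ha
    obtain ⟨j, hj, ha⟩ := Finset.mem_biUnion.mp ha
    refine ⟨((nextBlock_spec hD _).1 ha).1, notMem_Iic.mpr ?_⟩
    calc m ≤ j := hm j hj
      _ ≤ blockStart hD j := (blockStart_strictMono hD).id_le j
      _ < a := lt_of_mem_nextBlock_blockStart hD ha
  · obtain ⟨j, hj⟩ := hβ
    exact (nextBlock_spec hD _).2.1.mono (Finset.subset_biUnion_of_mem _ hj)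

end Blocks

theorem _root_.Set.Infinite.exists_two_pow_dvd_and_sum_mem_FS {D : Set ℕ} (hD : D.Infinite) :
    ∃ g : ℕ → ℕ, (∀ j j', j < j' → 2 ^ (g j + 1) ∣ g j') ∧
      ∀ β : Finset ℕ, β.Nonempty → ∀ m, (∀ j ∈ β, m ≤ j) → ∑ j ∈ β, g j ∈ FS (D \ Iic m) :=
  ⟨fun j => blockStart hD (j + 1), fun _ _ => two_pow_dvd_blockStart hD,
    fun _ hβ _ => sum_blockStart_mem_FS hD hβ⟩

section CodedSequence

variable {f : (ℕ → ℕ) → X}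

open Classical in
noncomputable def codedSeq (f : (ℕ → ℕ) → X) (n : ℕ) : X :=
  if h : ∃ p : (ℕ → ℕ) × ℕ, CodesPrefix n p.1 p.2 then f (trunc h.choose.1 h.choose.2) else f 0

theorem codedSeq_eq {n k : ℕ} {x : ℕ → ℕ} (h : CodesPrefix n x k) :
    codedSeq f n = f (trunc x k) := by
  have hex : ∃ p : (ℕ → ℕ) × ℕ, CodesPrefix n p.1 p.2 := ⟨(x, k), h⟩
  rw [codedSeq, dif_pos hex, (hex.choose_spec.unique h).2]

theorem codedSeq_eq_of_forall_not {n : ℕ} (h : ∀ x k, ¬ CodesPrefix n x k) :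
    codedSeq f n = f 0 :=
  dif_neg fun ⟨p, hp⟩ => h p.1 p.2 hp

theorem isIdealLimitPoint_codedSeq [TopologicalSpace X] (hf : Continuous f) (x : ℕ → ℕ) :
    IsIdealLimitPoint hindmanIdeal (codedSeq f) (f x) := by
  refine isIdealLimitPoint_hindmanIdeal_iff.mpr
    ⟨_, infinite_range_of_injective (two_pow_code_injective x), fun U hU => ?_⟩
  obtain ⟨k₀, hk₀⟩ := eventually_atTop.mp ((hf.tendsto x).comp (tendsto_trunc x) hU)
  refine ⟨2 ^ code x k₀, fun n ⟨hn, hnk₀⟩ => ?_⟩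
  obtain ⟨k, hk⟩ := exists_codesPrefix_of_mem_FS x hn
  have : 2 ^ code x k₀ < 2 ^ (code x k + 1) := (not_le.mp hnk₀).trans hk.lt_two_pow
  rw [codedSeq_eq hk]
  exact hk₀ k ((code_strictMono x).le_iff_le.mp
    (Nat.lt_succ_iff.mp ((Nat.pow_lt_pow_iff_right (by norm_num)).mp this)))

theorem mem_range_of_tendsto_codedSeq [TopologicalSpace X] [T2Space X] (hf : Continuous f)
    {a : ℕ → ℕ} {η : X}
    (hdvd : ∀ j j', j < j' → 2 ^ (a j + 1) ∣ a j') (hcodes : ∀ j, ∃ x k, CodesPrefix (a j) x k)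
    (hpair : ∀ j j', j < j' → ∃ x k, CodesPrefix (a j + a j') x k)
    (hlim : Tendsto (codedSeq f ∘ a) atTop (𝓝 η)) : η ∈ range f := by
  choose x k hxk using hcodes
  have hcoh : ∀ j j', j < j' → k j < k j' ∧ ∀ i < k j, x j i = x j' i := fun j j' h =>
    have ⟨_, _, hz⟩ := hpair j j' h
    (hxk j).lt_and_eq_of_add (Nat.lt_two_pow_self.trans (Nat.pow_lt_pow_succ one_lt_two))
      (hdvd j j' h) (hxk j') hz
  have hk : StrictMono k := strictMono_nat_of_lt_succ fun j => (hcoh j (j + 1) j.lt_succ_self).1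
  obtain ⟨z, hz⟩ := exists_trunc_eq_of_coherent hk fun j j' h => (hcoh j j' h).2
  have hseq : codedSeq f ∘ a = fun j => f (trunc z (k j)) :=
    funext fun j => (codedSeq_eq (hxk j)).trans (congrArg f (hz j))
  rw [hseq] at hlim
  exact ⟨z, tendsto_nhds_unique ((hf.tendsto z).comp ((tendsto_trunc z).comp hk.tendsto_atTop))
    hlim⟩

theorem mem_range_of_isFSLimitPoint_codedSeq [TopologicalSpace X] [T2Space X] (hf : Continuous f)
    {η : X} (h : IsFSLimitPoint (codedSeq f) η) : η ∈ range f := by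
  obtain ⟨D, hD, hDη⟩ := isFSLimitPoint_iff.mp h
  obtain ⟨g, hdvd, hFS⟩ := hD.exists_two_pow_dvd_and_sum_mem_FS
  have hsum : ∀ U ∈ 𝓝 η, ∃ m, ∀ β : Finset ℕ, β.Nonempty → (∀ j ∈ β, m ≤ j) →
      codedSeq f (∑ j ∈ β, g j) ∈ U := fun U hU =>
    (hDη U hU).imp fun m hm β hβ hβm => hm _ (hFS β hβ m hβm)
  by_cases hcodes : ∃ m₀, ∀ β : Finset ℕ, β.Nonempty → (∀ j ∈ β, m₀ ≤ j) →
      ∃ x k, CodesPrefix (∑ j ∈ β, g j) x k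
  · obtain ⟨m₀, hm₀⟩ := hcodes
    refine mem_range_of_tendsto_codedSeq hf (a := fun j => g (m₀ + j))
      (fun j j' h => hdvd _ _ (by omega)) (fun j => ?_) (fun j j' h => ?_) ?_
    · simpa using hm₀ {m₀ + j} (by simp) (by simp)
    · have := hm₀ {m₀ + j, m₀ + j'} (by simp) (by simp)
      rwa [Finset.sum_pair (by omega)] at this
    · refine fun U hU => eventually_atTop.mpr ?_
      obtain ⟨m, hm⟩ := hsum U hU
      exact ⟨m, fun j hj => by simpa using hm {m₀ + j} (by simp) (by simp; omega)⟩
  · push Not at hcodes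
    refine ⟨0, (specializes_iff_pure.mpr fun U hU => ?_).eq⟩
    obtain ⟨m, hm⟩ := hsum U hU
    obtain ⟨β, hβ, hβm, hnot⟩ := hcodes m
    exact mem_pure.mpr (by simpa only [codedSeq_eq_of_forall_not hnot] using hm β hβ hβm)

end CodedSequence

theorem _root_.MeasureTheory.AnalyticSet.exists_eq_setOf_isFSLimitPoint_and_isIdealLimitPoint
    [TopologicalSpace X] [T2Space X] {C : Set X} (hC : MeasureTheory.AnalyticSet C)
    (hCne : C.Nonempty) :
    ∃ y : ℕ → X, C = {η | IsFSLimitPoint y η} ∧ C = {η | IsIdealLimitPoint hindmanIdeal y η} := by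
  rw [MeasureTheory.AnalyticSet] at hC
  obtain ⟨f, hf, rfl⟩ := hC.resolve_left hCne.ne_empty
  have hH : range f ⊆ {η | IsIdealLimitPoint hindmanIdeal (codedSeq f) η} :=
    range_subset_iff.mpr (isIdealLimitPoint_codedSeq hf)
  have hFS : {η | IsFSLimitPoint (codedSeq f) η} ⊆ range f :=
    fun _ => mem_range_of_isFSLimitPoint_codedSeq hf
  have hHFS : {η | IsIdealLimitPoint hindmanIdeal (codedSeq f) η} ⊆
      {η | IsFSLimitPoint (codedSeq f) η} := fun _ => IsIdealLimitPoint.isFSLimitPoint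
  exact ⟨codedSeq f, (hH.trans hHFS).antisymm hFS, hH.antisymm (hHFS.trans hFS)⟩

theorem measurable_mem_FS {α : Type*} [MeasurableSpace α] {E : α → Set ℕ}
    (hE : ∀ i, Measurable fun a => i ∈ E a) (n : ℕ) : Measurable fun a => n ∈ FS (E a) := by
  change Measurable fun a => ∃ α : Finset ℕ, (∀ i, i ∈ α → i ∈ E a) ∧ α.Nonempty ∧ ∑ i ∈ α, i = n
  fun_prop

theorem analyticSet_setOf_exists_infinite [TopologicalSpace X] [PolishSpace X]
    (T : Set ℕ → ℕ → Set ℕ) (hT : ∀ m n, Measurable fun b : ℕ → Bool => n ∈ T {i | b i} m)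
    (y : ℕ → X) : MeasureTheory.AnalyticSet
      {η | ∃ D : Set ℕ, D.Infinite ∧ ∀ U ∈ 𝓝 η, ∃ m, ∀ n ∈ T D m, y n ∈ U} := by
  classical
  borelize X
  have : PolishSpace (ℕ → Bool) := PolishSpace.mk
  set B := TopologicalSpace.countableBasis X
  have hB := TopologicalSpace.isBasis_countableBasis X
  have : Countable B := (TopologicalSpace.countable_countableBasis X).to_subtype
  have hnhds (D : Set ℕ) (η : X) : (∀ U ∈ 𝓝 η, ∃ m, ∀ n ∈ T D m, y n ∈ U) ↔
      ∀ V : B, η ∈ (V : Set X) → ∃ m, ∀ n, n ∈ T D m → y n ∈ (V : Set X) := by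
    rw [(hB.nhds_hasBasis (a := η)).forall_iff fun U U' hUU' => Exists.imp fun m hm n hn =>
      hUU' (hm n hn)]
    exact ⟨fun h V hV => h V ⟨V.2, hV⟩, fun h V hV => h ⟨V, hV.1⟩ hV.2⟩
  have hmeas : MeasurableSet {p : (ℕ → Bool) × X | {i | p.1 i}.Infinite ∧
      ∀ V : B, p.2 ∈ (V : Set X) → ∃ m, ∀ n, n ∈ T {i | p.1 i} m → y n ∈ (V : Set X)} := by
    have hbit (i : ℕ) : Measurable fun p : (ℕ → Bool) × X => p.1 i = true := by fun_prop
    have hopen (V : B) : Measurable fun p : (ℕ → Bool) × X => p.2 ∈ (V : Set X) :=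
      (hB.isOpen V.2).measurableSet.mem.comp measurable_snd
    have hT' (m n : ℕ) : Measurable fun p : (ℕ → Bool) × X => n ∈ T {i | p.1 i} m :=
      (hT m n).comp measurable_fst
    simp_rw [Set.infinite_iff_exists_gt]
    exact Measurable.setOf (by fun_prop)
  convert hmeas.analyticSet.image_of_continuous continuous_snd
  ext η
  simp only [hnhds, mem_ofPred_eq, mem_image, Prod.exists, exists_eq_right]
  exact ⟨fun ⟨D, hD, hDη⟩ => ⟨fun i => decide (i ∈ D),
      by simpa only [decide_eq_true_eq, ofPred_mem_eq] using ⟨hD, hDη⟩⟩,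
    fun ⟨_, hb, hbη⟩ => ⟨_, hb, hbη⟩⟩

theorem analyticSet_setOf_isFSLimitPoint [TopologicalSpace X] [PolishSpace X] (y : ℕ → X) :
    MeasureTheory.AnalyticSet {η | IsFSLimitPoint y η} := by
  simp_rw [isFSLimitPoint_iff]
  exact analyticSet_setOf_exists_infinite (fun D m => FS (D \ Iic m))
    (fun m => measurable_mem_FS fun i => by simp only [Set.mem_sdiff, mem_ofPred_eq]; fun_prop) y

theorem analyticSet_setOf_isIdealLimitPoint_hindmanIdeal [TopologicalSpace X] [PolishSpace X]
    (y : ℕ → X) : MeasureTheory.AnalyticSet {η | IsIdealLimitPoint hindmanIdeal y η} := by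
  simp_rw [isIdealLimitPoint_hindmanIdeal_iff]
  exact analyticSet_setOf_exists_infinite (fun D m => FS D \ Iic m)
    (fun m n => (measurable_mem_FS (fun i => by fun_prop) n).and measurable_const) y

end HindmanLimit

theorem analytic_eq_lambda_fs_eq_lambda_hindman_general
    [TopologicalSpace X] [PolishSpace X]
    (C : Set X) (hCne : C.Nonempty) (hC : MeasureTheory.AnalyticSet C) :
    (∃ y : ℕ → X, C = {η | IsFSLimitPoint y η} ∧
        C = {η | IsIdealLimitPoint hindmanIdeal y η}) ∧
      {A : Set X | A.Nonempty ∧ ∃ y : ℕ → X, A = {η | IsFSLimitPoint y η}} =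
        {A : Set X | A.Nonempty ∧ MeasureTheory.AnalyticSet A} ∧
      {A : Set X | A.Nonempty ∧
          ∃ y : ℕ → X, A = {η | IsIdealLimitPoint hindmanIdeal y η}} =
        {A : Set X | A.Nonempty ∧ MeasureTheory.AnalyticSet A} := by
  refine ⟨hC.exists_eq_setOf_isFSLimitPoint_and_isIdealLimitPoint hCne, ?_, ?_⟩ <;>
    ext A <;> refine and_congr_right fun hA => ⟨?_, fun hAan => ?_⟩
  · rintro ⟨y, rfl⟩
    exact HindmanLimit.analyticSet_setOf_isFSLimitPoint y
  · obtain ⟨y, hy, -⟩ := hAan.exists_eq_setOf_isFSLimitPoint_and_isIdealLimitPoint hA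
    exact ⟨y, hy⟩
  · rintro ⟨y, rfl⟩
    exact HindmanLimit.analyticSet_setOf_isIdealLimitPoint_hindmanIdeal y
  · obtain ⟨y, -, hy⟩ := hAan.exists_eq_setOf_isFSLimitPoint_and_isIdealLimitPoint hA
    exact ⟨y, hy⟩

theorem analytic_eq_lambda_fs_eq_lambda_hindman
    [TopologicalSpace X] [PolishSpace X] [Uncountable X]
    (C : Set X) (hCne : C.Nonempty) (hC : MeasureTheory.AnalyticSet C) :
    (∃ y : ℕ → X, C = {η | IsFSLimitPoint y η} ∧
        C = {η | IsIdealLimitPoint hindmanIdeal y η}) ∧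
      {A : Set X | A.Nonempty ∧ ∃ y : ℕ → X, A = {η | IsFSLimitPoint y η}} =
        {A : Set X | A.Nonempty ∧ MeasureTheory.AnalyticSet A} ∧
      {A : Set X | A.Nonempty ∧
          ∃ y : ℕ → X, A = {η | IsIdealLimitPoint hindmanIdeal y η}} =
        {A : Set X | A.Nonempty ∧ MeasureTheory.AnalyticSet A} :=
  analytic_eq_lambda_fs_eq_lambda_hindman_general C hCne hC
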